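/- Let A be a list of n ≥ 0 formulas. Then the iterated ordered disjunction (×A) is HT-equivalent to the conjunction of the n implications (∧¬A[1..i−1]) → (A[i] ∨ ¬A[i]) for i = 1,…,n, together with the constraint (∧¬A) → ⊥, where ¬A is the list of negations of the elements of A. -/

import Mathlib

inductive Form (α : Type) : Type
  | atom : α → Form α
  | fls  : Form α
  | and  : Form α → Form α → Form α
  | or   : Form α → Form α → Form α
  | imp  : Form α → Form α → Form α

namespace Form

variable {α : Type}

/-- ¬F abbreviates F → ⊥ -/
def neg (F : Form α) : Form α := imp F fls

/-- ⊤ abbreviates ⊥ → ⊥ -/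
def tru : Form α := imp fls fls

/-- ordered disjunction F × G := F ∨ (¬F ∧ G) -/
def ox (F G : Form α) : Form α := or F (and (neg F) G)

/-- classical satisfaction -/
def csat (T : Set α) : Form α → Prop
  | atom p  => p ∈ T
  | fls     => False
  | and F G => csat T F ∧ csat T G
  | or F G  => csat T F ∨ csat T G
  | imp F G => csat T F → csat T G

/-- here-and-there satisfaction (for interpretations ⟨H,T⟩ with H ⊆ T) -/
def htsat (H T : Set α) : Form α → Prop
  | atom p  => p ∈ H
  | fls     => False
  | and F G => htsat H T F ∧ htsat H T G
  | or F G  => htsat H T F ∨ htsat H T G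
  | imp F G => (csat T F → csat T G) ∧ (¬ htsat H T F ∨ htsat H T G)

end Form

/-- HT-equivalence: satisfied by exactly the same HT-interpretations -/
def HTEquiv {α : Type} (F G : Form α) : Prop :=
  ∀ H T : Set α, H ⊆ T → (Form.htsat H T F ↔ Form.htsat H T G)

/-- ⟨T,T⟩ is an equilibrium model of the theory Γ -/
def EqModel {α : Type} (Γ : Set (Form α)) (T : Set α) : Prop :=
  (∀ F ∈ Γ, Form.htsat T T F) ∧ ∀ H : Set α, H ⊂ T → ¬ (∀ F ∈ Γ, Form.htsat H T F)

/-- iterated ordered disjunction, associated to the left; ⊥ when empty -/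
def oxList {α : Type} : List (Form α) → Form α
  | []      => Form.fls
  | a :: as => as.foldl Form.ox a

/-- iterated disjunction, associated to the left; ⊥ when empty -/
def orList {α : Type} : List (Form α) → Form α
  | []      => Form.fls
  | a :: as => as.foldl Form.or a

/-- iterated conjunction, associated to the left; ⊤ when empty -/
def andList {α : Type} : List (Form α) → Form α
  | []      => Form.tru
  | a :: as => as.foldl Form.and a

/-! In HT, a conjunction of negations holds at ⟨H,T⟩ iff it holds classically in T, so the only
HT-sensitive part of each rule of the program is its disjunct A[i]. Read from the front,
×(a :: as) holds iff a holds, or a is classically false and ×as holds. The program obeys the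
same recursion: its first rule says that a is true or classically false, its other rules are
those for as guarded by ¬a, and its constraint asks that some member be classically true. -/

namespace Form

variable {α : Type} {H T : Set α}

theorem csat_of_htsat (hHT : H ⊆ T) : ∀ F : Form α, htsat H T F → csat T F
  | atom _, h => hHT h
  | fls, h => h
  | and F G, h => ⟨csat_of_htsat hHT F h.1, csat_of_htsat hHT G h.2⟩
  | or F G, h => h.imp (csat_of_htsat hHT F) (csat_of_htsat hHT G)
  | imp _ _, h => h.1

theorem htsat_self_iff_csat : ∀ F : Form α, htsat T T F ↔ csat T F
  | atom _ => Iff.rfl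
  | fls => Iff.rfl
  | and F G => and_congr (htsat_self_iff_csat F) (htsat_self_iff_csat G)
  | or F G => or_congr (htsat_self_iff_csat F) (htsat_self_iff_csat G)
  | imp F G => by
      simp only [htsat, csat, htsat_self_iff_csat F, htsat_self_iff_csat G]
      tauto

theorem htsat_neg (hHT : H ⊆ T) (F : Form α) : htsat H T (neg F) ↔ ¬ csat T F :=
  ⟨fun h => h.1, fun h => ⟨h.elim, Or.inl (mt (csat_of_htsat hHT F) h)⟩⟩

theorem htsat_tru : htsat H T (tru : Form α) := ⟨id, Or.inl id⟩

theorem htsat_foldl_and (L : List (Form α)) (B : Form α) :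
    htsat H T (L.foldl and B) ↔ htsat H T B ∧ ∀ F ∈ L, htsat H T F := by
  induction L generalizing B with
  | nil => simp
  | cons a as ih =>
      rw [List.foldl_cons, ih, List.forall_mem_cons]
      exact and_assoc

theorem htsat_andList (L : List (Form α)) :
    htsat H T (andList L) ↔ ∀ F ∈ L, htsat H T F := by
  cases L with
  | nil => simpa [andList] using htsat_tru
  | cons a as => rw [andList, htsat_foldl_and, List.forall_mem_cons]

theorem htsat_andList_map_neg (hHT : H ⊆ T) (L : List (Form α)) :
    htsat H T (andList (L.map neg)) ↔ ∀ F ∈ L, ¬ csat T F := by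
  simp only [htsat_andList, List.forall_mem_map, htsat_neg hHT]

theorem csat_andList_map_neg (L : List (Form α)) :
    csat T (andList (L.map neg)) ↔ ∀ F ∈ L, ¬ csat T F := by
  rw [← htsat_self_iff_csat, htsat_andList_map_neg subset_rfl]

theorem htsat_imp_andList_map_neg_or_neg (hHT : H ⊆ T) (L : List (Form α)) (F : Form α) :
    htsat H T (imp (andList (L.map neg)) (or F (neg F))) ↔
      ((∀ G ∈ L, ¬ csat T G) → htsat H T F ∨ ¬ csat T F) := by
  have hF := csat_of_htsat hHT F
  simp only [htsat, csat, htsat_neg hHT, htsat_andList_map_neg hHT, csat_andList_map_neg]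
  tauto

theorem htsat_imp_andList_map_neg_fls (hHT : H ⊆ T) (L : List (Form α)) :
    htsat H T (imp (andList (L.map neg)) fls) ↔ ∃ F ∈ L, csat T F := by
  simp only [htsat, csat, htsat_andList_map_neg hHT, csat_andList_map_neg, imp_false, or_false,
    and_self, not_forall, not_not, exists_prop]

theorem csat_ox (F G : Form α) : csat T (ox F G) ↔ csat T F ∨ csat T G := by
  simp only [ox, csat]
  tauto

theorem htsat_ox (hHT : H ⊆ T) (F G : Form α) :
    htsat H T (ox F G) ↔ htsat H T F ∨ (¬ csat T F ∧ htsat H T G) := by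
  simp only [ox, htsat, htsat_neg hHT]

theorem htsat_foldl_ox (hHT : H ⊆ T) (L : List (Form α)) (B : Form α) :
    htsat H T (L.foldl ox B) ↔ htsat H T B ∨ (¬ csat T B ∧ htsat H T (oxList L)) := by
  induction L generalizing B with
  | nil => simp [oxList, htsat]
  | cons a as ih =>
      rw [List.foldl_cons, ih, htsat_ox hHT, csat_ox, oxList, ih]
      tauto

theorem htsat_oxList_cons (hHT : H ⊆ T) (a : Form α) (as : List (Form α)) :
    htsat H T (oxList (a :: as)) ↔ htsat H T a ∨ (¬ csat T a ∧ htsat H T (oxList as)) :=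
  htsat_foldl_ox hHT as a

theorem htsat_oxList (hHT : H ⊆ T) (A : List (Form α)) :
    htsat H T (oxList A) ↔
      (∀ i (hi : i < A.length), (∀ G ∈ A.take i, ¬ csat T G) →
          htsat H T A[i] ∨ ¬ csat T A[i]) ∧
        ∃ F ∈ A, csat T F := by
  induction A with
  | nil => simp [oxList, htsat]
  | cons a as ih =>
      have ha := csat_of_htsat hHT a
      simp only [htsat_oxList_cons hHT, ih, List.length_cons, Nat.forall_lt_succ_left',
        List.take_zero, List.take_succ_cons, List.getElem_cons_zero, List.getElem_cons_succ,
        List.not_mem_nil, false_implies, implies_true, true_implies,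
        List.mem_cons, exists_eq_or_imp]
      by_cases hca : csat T a
      · simp [hca]
      · simp [hca, mt ha hca]

end Form

/-- (×A) is HT-equivalent to the conjunction of
    (∧¬A[1..i−1]) → (A[i] ∨ ¬A[i]) for i = 1..n together with (∧¬A) → ⊥. -/
theorem oxList_unfold_program {α : Type} (A : List (Form α)) :
    HTEquiv (oxList A)
      (andList
        (((List.range A.length).attach.map (fun i =>
            Form.imp (andList ((A.take i.1).map Form.neg))
              (Form.or (A.get ⟨i.1, List.mem_range.mp i.2⟩)
                (Form.neg (A.get ⟨i.1, List.mem_range.mp i.2⟩))))) ++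
          [Form.imp (andList (A.map Form.neg)) Form.fls])) := by
  intro H T hHT
  simp only [Form.htsat_oxList hHT, Form.htsat_andList, List.forall_mem_append,
    List.forall_mem_map, List.forall_mem_singleton, List.mem_attach, true_implies,
    Subtype.forall, List.mem_range, List.get_eq_getElem,
    Form.htsat_imp_andList_map_neg_or_neg hHT, Form.htsat_imp_andList_map_neg_fls hHT]
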